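/- There is a universal constant C > 0 such that for any measurable f: ℝ³×ℝ³ → [0,1] with |p|f ∈ L¹, the density ρ_f = ∫ f(·,p) dp satisfies ‖ρ_f‖_{L^{4/3}(ℝ³)}^{4/3} ≤ C ∫∫ |p| f(q,p) dq dp. -/

import Mathlib

/-! Bathtub argument: if `0 ≤ g ≤ 1` then `g ≤ 1_{|p| < R} + |p| g / R`, so
`∫ g ≤ |B_1| R^d + T / R` with `T = ∫ |p| g`. The choice `R = T^{1/(d+1)}` gives
`∫ g ≤ (|B_1| + 1) T^{d/(d+1)}`, i.e. `(∫ g)^{(d+1)/d} ≤ C T`; applying this to every fibre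
`g = f(q, ·)` and integrating in `q` gives the inequality, with `(d + 1) / d = 4 / 3`. -/

open MeasureTheory

noncomputable section

abbrev E3 := EuclideanSpace ℝ (Fin 3)

open Metric Module

section

variable {E : Type*} [NormedAddCommGroup E] [MeasurableSpace E] {μ : Measure E}

theorem integral_le_measureReal_ball_add_div [ProperSpace E] [OpensMeasurableSpace E]
    [IsFiniteMeasureOnCompacts μ] {g : E → ℝ} (h0 : ∀ᵐ p ∂μ, 0 ≤ g p)
    (h1 : ∀ᵐ p ∂μ, g p ≤ 1) (hi : Integrable (fun p => ‖p‖ * g p) μ) {R : ℝ} (hR : 0 < R) :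
    ∫ p, g p ∂μ ≤ μ.real (ball 0 R) + (∫ p, ‖p‖ * g p ∂μ) / R := by
  have hball : Integrable ((ball (0 : E) R).indicator 1) μ :=
    (integrable_indicator_iff measurableSet_ball).2
      (integrableOn_const (C := (1 : ℝ)) measure_ball_lt_top.ne)
  have hbound : ∀ᵐ p ∂μ, g p ≤ (ball (0 : E) R).indicator 1 p + ‖p‖ * g p / R := by
    filter_upwards [h0, h1] with p hp0 hp1
    by_cases hp : p ∈ ball (0 : E) R
    · rw [Set.indicator_of_mem hp, Pi.one_apply]
      have : 0 ≤ ‖p‖ * g p / R := by positivity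
      linarith
    · have hRp : R ≤ ‖p‖ := by simpa using hp
      rw [Set.indicator_of_notMem hp, zero_add, le_div_iff₀ hR]
      nlinarith
  calc ∫ p, g p ∂μ ≤ ∫ p, ((ball (0 : E) R).indicator 1 p + ‖p‖ * g p / R) ∂μ :=
        integral_mono_of_nonneg h0 (hball.add (hi.div_const R)) hbound
    _ = μ.real (ball 0 R) + (∫ p, ‖p‖ * g p ∂μ) / R := by
        rw [integral_add hball (hi.div_const R), integral_indicator_one measurableSet_ball,
          integral_div]

variable [NormedSpace ℝ E] [BorelSpace E] [FiniteDimensional ℝ E] [Nontrivial E]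
  [μ.IsAddHaarMeasure]

theorem integral_le_mul_integral_norm_mul_rpow {g : E → ℝ} (h0 : ∀ᵐ p ∂μ, 0 ≤ g p)
    (h1 : ∀ᵐ p ∂μ, g p ≤ 1) (hi : Integrable (fun p => ‖p‖ * g p) μ) :
    ∫ p, g p ∂μ ≤ (μ.real (ball 0 1) + 1) *
      (∫ p, ‖p‖ * g p ∂μ) ^ ((finrank ℝ E : ℝ) / (finrank ℝ E + 1)) := by
  set d : ℝ := (finrank ℝ E : ℝ)
  have hd : 0 < d := Nat.cast_pos.2 finrank_pos
  set T := ∫ p, ‖p‖ * g p ∂μ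
  have hnorm_mul : ∀ᵐ p ∂μ, 0 ≤ ‖p‖ * g p := h0.mono fun p hp => mul_nonneg (norm_nonneg p) hp
  rcases (integral_nonneg_of_ae hnorm_mul).eq_or_lt with hT | hT
  · -- `μ` has no atom at `0`, so `‖p‖ g p = 0` a.e. forces `g = 0` a.e.
    have hzero : (fun p => ‖p‖ * g p) =ᵐ[μ] 0 :=
      (integral_eq_zero_iff_of_nonneg_ae hnorm_mul hi).1 hT.symm
    have hg : g =ᵐ[μ] 0 := by
      filter_upwards [hzero, μ.ae_ne 0] with p hp hp0
      simpa [hp0] using hp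
    have hT0 : T = 0 := hT.symm
    rw [integral_congr_ae hg, hT0, Real.zero_rpow (by positivity)]
    simp
  · set R := T ^ (1 / (d + 1))
    have hR : 0 < R := by positivity
    have hRd : R ^ finrank ℝ E = T ^ (d / (d + 1)) := by
      rw [← Real.rpow_natCast, ← Real.rpow_mul hT.le, one_div_mul_eq_div]
    have hTR : T / R = T ^ (d / (d + 1)) := by
      rw [show d / (d + 1) = 1 - 1 / (d + 1) by field_simp; ring, Real.rpow_sub hT,
        Real.rpow_one]
    calc ∫ p, g p ∂μ ≤ μ.real (ball 0 R) + T / R :=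
          integral_le_measureReal_ball_add_div h0 h1 hi hR
      _ = (μ.real (ball 0 1) + 1) * T ^ (d / (d + 1)) := by
          rw [measureReal_def, Measure.addHaar_ball_of_pos μ 0 hR, ENNReal.toReal_mul,
            ENNReal.toReal_ofReal (by positivity), hRd, hTR, ← measureReal_def]
          ring

theorem integral_rpow_le_mul_integral_norm_mul {g : E → ℝ} (h0 : ∀ᵐ p ∂μ, 0 ≤ g p)
    (h1 : ∀ᵐ p ∂μ, g p ≤ 1) (hi : Integrable (fun p => ‖p‖ * g p) μ) :
    (∫ p, g p ∂μ) ^ (((finrank ℝ E : ℝ) + 1) / finrank ℝ E) ≤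
      (μ.real (ball 0 1) + 1) ^ (((finrank ℝ E : ℝ) + 1) / finrank ℝ E) *
        ∫ p, ‖p‖ * g p ∂μ := by
  set d : ℝ := (finrank ℝ E : ℝ)
  have hd : 0 < d := Nat.cast_pos.2 finrank_pos
  have hT : 0 ≤ ∫ p, ‖p‖ * g p ∂μ :=
    integral_nonneg_of_ae (h0.mono fun p hp => mul_nonneg (norm_nonneg p) hp)
  calc (∫ p, g p ∂μ) ^ ((d + 1) / d)
      ≤ ((μ.real (ball 0 1) + 1) * (∫ p, ‖p‖ * g p ∂μ) ^ (d / (d + 1))) ^ ((d + 1) / d) :=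
        Real.rpow_le_rpow (integral_nonneg_of_ae h0)
          (integral_le_mul_integral_norm_mul_rpow h0 h1 hi) (by positivity)
    _ = (μ.real (ball 0 1) + 1) ^ ((d + 1) / d) * ∫ p, ‖p‖ * g p ∂μ := by
        rw [Real.mul_rpow (by positivity) (by positivity), ← Real.rpow_mul hT,
          show d / (d + 1) * ((d + 1) / d) = 1 by field_simp, Real.rpow_one]

theorem integral_integral_rpow_le_mul_integral_norm_mul {X : Type*} [MeasurableSpace X]
    {ν : Measure X} [SFinite ν] {f : X × E → ℝ} (h0 : ∀ᵐ x ∂ν.prod μ, 0 ≤ f x)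
    (h1 : ∀ᵐ x ∂ν.prod μ, f x ≤ 1) (hi : Integrable (fun x => ‖x.2‖ * f x) (ν.prod μ)) :
    ∫ q, (∫ p, f (q, p) ∂μ) ^ (((finrank ℝ E : ℝ) + 1) / finrank ℝ E) ∂ν ≤
      (μ.real (ball 0 1) + 1) ^ (((finrank ℝ E : ℝ) + 1) / finrank ℝ E) *
        ∫ x, ‖x.2‖ * f x ∂ν.prod μ := by
  set a : ℝ := ((finrank ℝ E : ℝ) + 1) / finrank ℝ E
  set C := (μ.real (ball 0 1) + 1) ^ a
  have h0' := Measure.ae_ae_of_ae_prod h0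
  have hfibre : ∀ᵐ q ∂ν, (∫ p, f (q, p) ∂μ) ^ a ≤ C * ∫ p, ‖p‖ * f (q, p) ∂μ := by
    filter_upwards [h0', Measure.ae_ae_of_ae_prod h1, hi.prod_right_ae] with q hq0 hq1 hqi
    exact integral_rpow_le_mul_integral_norm_mul hq0 hq1 hqi
  have hρ : ∀ᵐ q ∂ν, 0 ≤ (∫ p, f (q, p) ∂μ) ^ a :=
    h0'.mono fun q hq => Real.rpow_nonneg (integral_nonneg_of_ae hq) a
  calc _ ≤ ∫ q, C * ∫ p, ‖p‖ * f (q, p) ∂μ ∂ν :=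
        integral_mono_of_nonneg hρ (hi.integral_prod_left.const_mul C) hfibre
    _ = _ := by rw [integral_const_mul, integral_prod _ hi]

end

/-- Endpoint kinetic interpolation inequality:
`‖ρ_f‖_{L^{4/3}}^{4/3} ≤ C ∫∫ |p| f(q,p) dq dp` for `0 ≤ f ≤ 1`. -/
theorem kinetic_interpolation_endpoint :
    ∃ C > 0, ∀ f : E3 × E3 → ℝ, Measurable f →
      (∀ᵐ x : E3 × E3, 0 ≤ f x) → (∀ᵐ x : E3 × E3, f x ≤ 1) →
      Integrable (fun x : E3 × E3 => ‖x.2‖ * f x) →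
      (∫ q : E3, (∫ p : E3, f (q, p)) ^ ((4 : ℝ) / 3)) ≤
        C * ∫ x : E3 × E3, ‖x.2‖ * f x := by
  refine ⟨((volume : Measure E3).real (ball 0 1) + 1) ^ ((4 : ℝ) / 3), by positivity, ?_⟩
  intro f _ h0 h1 hi
  rw [Measure.volume_eq_prod] at h0 h1 hi ⊢
  have h := integral_integral_rpow_le_mul_integral_norm_mul h0 h1 hi
  norm_num [finrank_euclideanSpace_fin] at h
  exact h
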